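/- Let P_n be the quotient of the free associative unital k-algebra on generators v_A, indexed by nonempty subsets A ⊆ I_n, by the two-sided ideal generated by the elements Σ_{C ⊆ A, D ⊆ A} (v_{C∪{j}} + v_{C∪{i,j}})·v_{D∪{i}} − Σ_{C ⊆ A, D ⊆ A} (v_{D∪{i}} + v_{D∪{i,j}})·v_{C∪{j}}, one for each triple (A,i,j) with A ⊆ I_n and i,j ∈ I_n \ A distinct. Then there is an isomorphism of k-algebras P_n → Q_n sending the class of v_A to u(A) for every nonempty A ⊆ I_n. -/
import Mathlib


/-- Index type for the generators `z_{A,i}` of `Qₙ`: pairs `(A, i)` with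
`A ⊆ Iₙ` and `i ∉ A`. -/
abbrev QIdx (n : ℕ) := {p : Finset (Fin n) × Fin n // p.2 ∉ p.1}

/-- The defining relations of the algebra `Qₙ`:
additive relations `z_{A∪{i},j} + z_{A,i} = z_{A∪{j},i} + z_{A,j}` and
multiplicative relations `z_{A∪{i},j} · z_{A,i} = z_{A∪{j},i} · z_{A,j}`. -/
inductive QnRel (K : Type*) [Field K] (n : ℕ) :
    FreeAlgebra K (QIdx n) → FreeAlgebra K (QIdx n) → Prop
  | add (A : Finset (Fin n)) (i j : Fin n) (hi : i ∉ A) (hj : j ∉ A) (hij : i ≠ j) :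
      QnRel K n
        (FreeAlgebra.ι K (⟨(insert i A, j), by simp [Finset.mem_insert, hij.symm, hj]⟩ : QIdx n)
          + FreeAlgebra.ι K (⟨(A, i), hi⟩ : QIdx n))
        (FreeAlgebra.ι K (⟨(insert j A, i), by simp [Finset.mem_insert, hij, hi]⟩ : QIdx n)
          + FreeAlgebra.ι K (⟨(A, j), hj⟩ : QIdx n))
  | mul (A : Finset (Fin n)) (i j : Fin n) (hi : i ∉ A) (hj : j ∉ A) (hij : i ≠ j) :
      QnRel K n
        (FreeAlgebra.ι K (⟨(insert i A, j), by simp [Finset.mem_insert, hij.symm, hj]⟩ : QIdx n)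
          * FreeAlgebra.ι K (⟨(A, i), hi⟩ : QIdx n))
        (FreeAlgebra.ι K (⟨(insert j A, i), by simp [Finset.mem_insert, hij, hi]⟩ : QIdx n)
          * FreeAlgebra.ι K (⟨(A, j), hj⟩ : QIdx n))

/-- The algebra `Qₙ`: the quotient of the free associative unital `K`-algebra on the
generators `z_{A,i}` by the two-sided ideal generated by the defining relations. -/
abbrev Qn (K : Type*) [Field K] (n : ℕ) := RingQuot (QnRel K n)

/-- The image `z_{A,i}` of a generator in `Qₙ` (junk value `0` if `i ∈ A`). -/
noncomputable def zQ (K : Type*) [Field K] (n : ℕ) (A : Finset (Fin n)) (i : Fin n) : Qn K n :=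
  if h : i ∉ A then RingQuot.mkAlgHom K (QnRel K n) (FreeAlgebra.ι K (⟨(A, i), h⟩ : QIdx n))
  else 0

/-- The element `u(A) = Σ_{D ⊆ A \ {i}} (−1)^{|A|−|D|} z_{D,i}` for the choice `i = min A`
(for nonempty `A`), with `u(∅) = 1`. -/
noncomputable def uQ (K : Type*) [Field K] (n : ℕ) (A : Finset (Fin n)) : Qn K n :=
  if h : A.Nonempty then
    ∑ D ∈ (A.erase (A.min' h)).powerset,
      (-1 : Qn K n) ^ (A.card - D.card) * zQ K n D (A.min' h)
  else 1

/-- The relations defining `Q(F)`: each `u(A)` with nonempty `A ∉ F` is set to `0`. -/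
inductive QcRel (K : Type*) [Field K] (n : ℕ) (F : Set (Finset (Fin n))) :
    Qn K n → Qn K n → Prop
  | rel (A : Finset (Fin n)) (hA : A.Nonempty) (hAF : A ∉ F) : QcRel K n F (uQ K n A) 0

/-- The algebra `Q(F)`: the quotient of `Qₙ` by the two-sided ideal generated by all
`u(A)` with nonempty `A ∉ F`. -/
abbrev Qc (K : Type*) [Field K] (n : ℕ) (F : Set (Finset (Fin n))) := RingQuot (QcRel K n F)

/-- The image of `u(A)` in `Q(F)`. -/
noncomputable def uc (K : Type*) [Field K] (n : ℕ) (F : Set (Finset (Fin n)))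
    (A : Finset (Fin n)) : Qc K n F :=
  RingQuot.mkAlgHom K (QcRel K n F) (uQ K n A)

/-- The generator `v_B` of the free algebra on the nonempty subsets of `Iₙ`. -/
noncomputable def vgen (K : Type*) [Field K] (n : ℕ) (B : Finset (Fin n)) (hB : B.Nonempty) :
    FreeAlgebra K {A : Finset (Fin n) // A.Nonempty} :=
  FreeAlgebra.ι K (⟨B, hB⟩ : {A : Finset (Fin n) // A.Nonempty})

/-- The defining relations of `Pₙ`: one relation (4_{A,i,j}) for each triple `(A,i,j)`
with `A ⊆ Iₙ` and `i, j ∉ A` distinct. -/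
inductive PnRel (K : Type*) [Field K] (n : ℕ) :
    FreeAlgebra K {A : Finset (Fin n) // A.Nonempty} →
      FreeAlgebra K {A : Finset (Fin n) // A.Nonempty} → Prop
  | rel (A : Finset (Fin n)) (i j : Fin n) (hi : i ∉ A) (hj : j ∉ A) (hij : i ≠ j) :
      PnRel K n
        (∑ C ∈ A.powerset, ∑ D ∈ A.powerset,
          (vgen K n (insert j C) (Finset.insert_nonempty _ _)
              + vgen K n (insert i (insert j C)) (Finset.insert_nonempty _ _)) *
            vgen K n (insert i D) (Finset.insert_nonempty _ _))
        (∑ C ∈ A.powerset, ∑ D ∈ A.powerset,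
          (vgen K n (insert i D) (Finset.insert_nonempty _ _)
              + vgen K n (insert i (insert j D)) (Finset.insert_nonempty _ _)) *
            vgen K n (insert j C) (Finset.insert_nonempty _ _))

/-- The algebra `Pₙ`: quotient of the free algebra on the `v_A` (nonempty `A ⊆ Iₙ`)
by the two-sided ideal generated by the relations (4_{A,i,j}). -/
abbrev Pn (K : Type*) [Field K] (n : ℕ) := RingQuot (PnRel K n)



section Aux

variable {R : Type*} [Ring R] {α : Type*} [DecidableEq α]

lemma neg_one_pow_nat_sub {a e : ℕ} (h : e ≤ a) : (-1 : R) ^ (a - e) = (-1 : R) ^ (a + e) := by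
  rw [show a + e = (a - e) + 2 * e by omega, pow_add, pow_mul, neg_one_sq, one_pow, mul_one]

lemma key_sum (A : Finset α) (f : Finset α → R) :
    ∑ D ∈ A.powerset, ∑ E ∈ D.powerset, (-1 : R) ^ (D.card + E.card) * f E = f A := by
  induction A using Finset.induction_on generalizing f with
  | empty => simp
  | @insert a s ha ih =>
    rw [Finset.sum_powerset_insert ha]
    have h1 : ∀ D ∈ s.powerset,
        (∑ E ∈ (insert a D).powerset, (-1 : R) ^ ((insert a D).card + E.card) * f E)
          = -(∑ E ∈ D.powerset, (-1 : R) ^ (D.card + E.card) * f E)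
            + ∑ E ∈ D.powerset, (-1 : R) ^ (D.card + E.card) * f (insert a E) := by
      intro D hD
      rw [Finset.mem_powerset] at hD
      have haD : a ∉ D := fun h => ha (hD h)
      rw [Finset.sum_powerset_insert haD, Finset.card_insert_of_notMem haD,
        ← Finset.sum_neg_distrib]
      congr 1
      · refine Finset.sum_congr rfl fun E _ => ?_
        rw [show D.card + 1 + E.card = (D.card + E.card) + 1 by omega, pow_succ, mul_neg_one,
          neg_mul]
      · refine Finset.sum_congr rfl fun E hE => ?_
        rw [Finset.mem_powerset] at hE
        have haE : a ∉ E := fun h => haD (hE h)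
        rw [Finset.card_insert_of_notMem haE,
          show D.card + 1 + (E.card + 1) = (D.card + E.card) + 2 by omega, pow_add, neg_one_sq,
          mul_one]
    rw [Finset.sum_congr rfl h1, ← ih (fun E => f (insert a E))]
    rw [← Finset.sum_add_distrib]
    refine Finset.sum_congr rfl fun D _ => ?_
    abel


lemma pair_helper {R : Type*} [Ring R] (k : ℕ) (x y x' y' : R) (h : y' + x = y + x') :
    (-1 : R) ^ k * x + (-1 : R) ^ (k + 1) * y = (-1 : R) ^ k * x' + (-1 : R) ^ (k + 1) * y' := by
  rw [pow_succ, mul_neg_one, neg_mul, neg_mul, ← sub_eq_add_neg, ← sub_eq_add_neg,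
    ← mul_sub, ← mul_sub]
  congr 1
  rw [sub_eq_sub_iff_add_eq_add, add_comm x y', add_comm x' y]
  exact h

lemma pow_succ_neg_mul {R : Type*} [Ring R] (k : ℕ) (x : R) :
    (-1 : R) ^ (k + 1) * x = -((-1 : R) ^ k * x) := by
  rw [pow_succ, mul_neg_one, neg_mul]

lemma neg_mul_neg' {R : Type*} [Ring R] (a b : R) : -a * -b = a * b := neg_mul_neg a b

lemma pow_succ_mul_neg {R : Type*} [Ring R] (k : ℕ) (x : R) :
    (-1 : R) ^ (k + 1) * -x = (-1 : R) ^ k * x := by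
  rw [pow_succ, mul_assoc, neg_one_mul, neg_neg]

lemma pow_merge {R : Type*} [Ring R] (d e s : ℕ) (x : R) :
    (-1 : R) ^ (d + e) * ((-1 : R) ^ (s + e) * x) = (-1 : R) ^ (s + d) * x := by
  rw [← mul_assoc, ← pow_add, show d + e + (s + e) = (s + d) + 2 * e by omega, pow_add,
    pow_mul, neg_one_sq, one_pow, mul_one]

lemma even_neg_one_pow_mul {R : Type*} [Ring R] (k : ℕ) (x : R) :
    (-1 : R) ^ (2 * k) * x = x := by
  rw [pow_mul, neg_one_sq, one_pow, one_mul]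

end Aux
noncomputable section QSide

variable (K : Type*) [Field K] (n : ℕ)

lemma zQ_eq (A : Finset (Fin n)) (i : Fin n) (hi : i ∉ A) :
    zQ K n A i = RingQuot.mkAlgHom K (QnRel K n) (FreeAlgebra.ι K (⟨(A, i), hi⟩ : QIdx n)) := by
  rw [zQ, dif_pos hi]

lemma zQ_add_rel (A : Finset (Fin n)) (i j : Fin n) (hi : i ∉ A) (hj : j ∉ A) (hij : i ≠ j) :
    zQ K n (insert i A) j + zQ K n A i = zQ K n (insert j A) i + zQ K n A j := by
  have h := RingQuot.mkAlgHom_rel K (QnRel.add (K := K) (n := n) A i j hi hj hij)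
  simp only [map_add] at h
  rw [zQ_eq K n _ j (by simp [Finset.mem_insert, hij.symm, hj]),
    zQ_eq K n A i hi, zQ_eq K n _ i (by simp [Finset.mem_insert, hij, hi]),
    zQ_eq K n A j hj]
  exact h

lemma zQ_mul_rel (A : Finset (Fin n)) (i j : Fin n) (hi : i ∉ A) (hj : j ∉ A) (hij : i ≠ j) :
    zQ K n (insert i A) j * zQ K n A i = zQ K n (insert j A) i * zQ K n A j := by
  have h := RingQuot.mkAlgHom_rel K (QnRel.mul (K := K) (n := n) A i j hi hj hij)
  simp only [map_mul] at h
  rw [zQ_eq K n _ j (by simp [Finset.mem_insert, hij.symm, hj]),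
    zQ_eq K n A i hi, zQ_eq K n _ i (by simp [Finset.mem_insert, hij, hi]),
    zQ_eq K n A j hj]
  exact h

/-- The sum `Σ_{D ⊆ A \ {i}} (−1)^{|A|+|D|} z_{D,i}` (additive-exponent version). -/
noncomputable def SQ (A : Finset (Fin n)) (i : Fin n) : Qn K n :=
  ∑ D ∈ (A.erase i).powerset, (-1 : Qn K n) ^ (A.card + D.card) * zQ K n D i

lemma SQ_indep (A : Finset (Fin n)) (i j : Fin n) (hi : i ∈ A) (hj : j ∈ A) :
    SQ K n A i = SQ K n A j := by
  rcases eq_or_ne i j with rfl | hij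
  · rfl
  have hji : j ∈ A.erase i := Finset.mem_erase.mpr ⟨hij.symm, hj⟩
  have hij' : i ∈ A.erase j := Finset.mem_erase.mpr ⟨hij, hi⟩
  set B := (A.erase i).erase j with hB
  have hB' : (A.erase j).erase i = B := by rw [hB, Finset.erase_right_comm]
  have e1 : A.erase i = insert j B := (Finset.insert_erase hji).symm
  have e2 : A.erase j = insert i B := by
    rw [← hB']; exact (Finset.insert_erase hij').symm
  have hjB : j ∉ B := Finset.notMem_erase j _
  have hiB : i ∉ B := by rw [← hB']; exact Finset.notMem_erase i _
  rw [SQ, SQ, e1, e2, Finset.sum_powerset_insert hjB, Finset.sum_powerset_insert hiB,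
    ← Finset.sum_add_distrib, ← Finset.sum_add_distrib]
  refine Finset.sum_congr rfl fun E hE => ?_
  rw [Finset.mem_powerset] at hE
  have hjE : j ∉ E := fun h => hjB (hE h)
  have hiE : i ∉ E := fun h => hiB (hE h)
  rw [Finset.card_insert_of_notMem hjE, Finset.card_insert_of_notMem hiE,
    show A.card + (E.card + 1) = (A.card + E.card) + 1 by omega]
  exact pair_helper (A.card + E.card) _ _ _ _ (zQ_add_rel K n E i j hiE hjE hij)
lemma uQ_eq_SQ (A : Finset (Fin n)) (i : Fin n) (hi : i ∈ A) : uQ K n A = SQ K n A i := by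
  have hA : A.Nonempty := ⟨i, hi⟩
  rw [uQ, dif_pos hA, ← SQ_indep K n A (A.min' hA) i (A.min'_mem hA) hi, SQ]
  refine Finset.sum_congr rfl fun D hD => ?_
  rw [Finset.mem_powerset] at hD
  have hcard : D.card ≤ A.card :=
    Finset.card_le_card (hD.trans (Finset.erase_subset _ _))
  rw [neg_one_pow_nat_sub hcard]

lemma sum_uQ_insert (A : Finset (Fin n)) (i : Fin n) (hi : i ∉ A) :
    ∑ D ∈ A.powerset, uQ K n (insert i D) = - zQ K n A i := by
  have h1 : ∀ D ∈ A.powerset, uQ K n (insert i D)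
      = -∑ E ∈ D.powerset, (-1 : Qn K n) ^ (D.card + E.card) * zQ K n E i := by
    intro D hD
    rw [Finset.mem_powerset] at hD
    have hiD : i ∉ D := fun h => hi (hD h)
    rw [uQ_eq_SQ K n _ i (Finset.mem_insert_self i D), SQ, Finset.erase_insert hiD,
      Finset.card_insert_of_notMem hiD, ← Finset.sum_neg_distrib]
    refine Finset.sum_congr rfl fun E _ => ?_
    rw [show D.card + 1 + E.card = (D.card + E.card) + 1 by omega]
    exact pow_succ_neg_mul _ _
  rw [Finset.sum_congr rfl h1, Finset.sum_neg_distrib]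
  congr 1
  exact key_sum A (fun E => zQ K n E i)

lemma sum_uQ_insert2 (A : Finset (Fin n)) (i j : Fin n) (hi : i ∉ A) (hj : j ∉ A) (hij : i ≠ j) :
    ∑ C ∈ A.powerset, uQ K n (insert i (insert j C))
      = - zQ K n (insert j A) i + zQ K n A i := by
  have h := sum_uQ_insert K n (insert j A) i (by simp [Finset.mem_insert, hij, hi])
  rw [Finset.sum_powerset_insert hj, sum_uQ_insert K n A i hi] at h
  have h2 := eq_sub_of_add_eq' h
  rw [sub_neg_eq_add] at h2
  rw [h2, add_comm]

end QSide
noncomputable section PSide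

variable (K : Type*) [Field K] (n : ℕ)

/-- Class of `v_B` in `Pₙ`. -/
noncomputable def pP (B : Finset (Fin n)) (hB : B.Nonempty) : Pn K n :=
  RingQuot.mkAlgHom K (PnRel K n) (vgen K n B hB)

lemma pP_congr {B B' : Finset (Fin n)} (hB : B.Nonempty) (hB' : B'.Nonempty) (h : B = B') :
    pP K n B hB = pP K n B' hB' := by subst h; rfl

/-- Class of `v_{insert i B}` in `Pₙ`. -/
noncomputable def pins (i : Fin n) (B : Finset (Fin n)) : Pn K n :=
  pP K n (insert i B) (Finset.insert_nonempty _ _)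

lemma pins_comm (i j : Fin n) (B : Finset (Fin n)) :
    pins K n j (insert i B) = pins K n i (insert j B) :=
  pP_congr K n _ _ (Finset.insert_comm j i B)

/-- The algebra map `FreeAlgebra → Qₙ` sending `v_A ↦ u(A)`. -/
noncomputable def phiFree : FreeAlgebra K {A : Finset (Fin n) // A.Nonempty} →ₐ[K] Qn K n :=
  FreeAlgebra.lift K (fun A : {A : Finset (Fin n) // A.Nonempty} => uQ K n A.1)

lemma phiFree_rel {x y : FreeAlgebra K {A : Finset (Fin n) // A.Nonempty}}
    (h : PnRel K n x y) : phiFree K n x = phiFree K n y := by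
  cases h with
  | rel A i j hi hj hij =>
    simp only [phiFree, map_sum, map_mul, map_add, vgen, FreeAlgebra.lift_ι_apply]
    have hL : (∑ C ∈ A.powerset, ∑ D ∈ A.powerset,
        (uQ K n (insert j C) + uQ K n (insert i (insert j C))) * uQ K n (insert i D))
        = (∑ C ∈ A.powerset, (uQ K n (insert j C) + uQ K n (insert i (insert j C)))) *
          (∑ D ∈ A.powerset, uQ K n (insert i D)) := (Finset.sum_mul_sum _ _ _ _).symm
    have hR : (∑ C ∈ A.powerset, ∑ D ∈ A.powerset,
        (uQ K n (insert i D) + uQ K n (insert i (insert j D))) * uQ K n (insert j C))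
        = (∑ D ∈ A.powerset, (uQ K n (insert i D) + uQ K n (insert i (insert j D)))) *
          (∑ C ∈ A.powerset, uQ K n (insert j C)) := by
      rw [Finset.sum_comm]
      exact (Finset.sum_mul_sum _ _ _ _).symm
    rw [hL, hR, Finset.sum_add_distrib, Finset.sum_add_distrib,
      sum_uQ_insert K n A j hj, sum_uQ_insert K n A i hi,
      sum_uQ_insert2 K n A i j hi hj hij]
    have hadd := zQ_add_rel K n A i j hi hj hij
    have e : zQ K n (insert j A) i = zQ K n (insert i A) j + zQ K n A i - zQ K n A j := by
      rw [eq_sub_iff_add_eq]; exact hadd.symm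
    have f1 : -zQ K n A j + (-zQ K n (insert j A) i + zQ K n A i)
        = -(zQ K n (insert i A) j) := by rw [e]; abel
    have f2 : -zQ K n A i + (-zQ K n (insert j A) i + zQ K n A i)
        = -(zQ K n (insert j A) i) := by abel
    rw [f1, f2]
    exact (neg_mul_neg' _ _).trans ((zQ_mul_rel K n A i j hi hj hij).trans
      (neg_mul_neg' _ _).symm)

/-- The map on generators for `Qₙ → Pₙ`: `z_{A,i} ↦ −Σ_{D ⊆ A} v_{D∪{i}}`. -/
noncomputable def psiFun : QIdx n → Pn K n :=
  fun p => -∑ D ∈ p.1.1.powerset, pins K n p.1.2 D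

/-- The algebra map `FreeAlgebra → Pₙ` extending `psiFun`. -/
noncomputable def psiFree : FreeAlgebra K (QIdx n) →ₐ[K] Pn K n :=
  FreeAlgebra.lift K (psiFun K n)

lemma psiFree_rel {x y : FreeAlgebra K (QIdx n)} (h : QnRel K n x y) :
    psiFree K n x = psiFree K n y := by
  cases h with
  | add A i j hi hj hij =>
    simp only [psiFree, map_add, FreeAlgebra.lift_ι_apply, psiFun]
    rw [Finset.sum_powerset_insert hi, Finset.sum_powerset_insert hj,
      Finset.sum_congr rfl (fun D _ => pins_comm K n i j D)]
    abel
  | mul A i j hi hj hij =>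
    simp only [psiFree, map_mul, FreeAlgebra.lift_ι_apply, psiFun]
    have hrel := RingQuot.mkAlgHom_rel K (PnRel.rel (K := K) (n := n) A i j hi hj hij)
    simp only [map_sum, map_mul, map_add] at hrel
    calc (-∑ D ∈ (insert i A).powerset, pins K n j D) * -∑ D ∈ A.powerset, pins K n i D
        = (∑ D ∈ (insert i A).powerset, pins K n j D) * ∑ D ∈ A.powerset, pins K n i D :=
          neg_mul_neg' _ _
      _ = (∑ C ∈ A.powerset, (pins K n j C + pins K n i (insert j C))) *
            ∑ D ∈ A.powerset, pins K n i D := by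
          rw [Finset.sum_powerset_insert hi,
            Finset.sum_congr rfl (fun C _ => pins_comm K n i j C), Finset.sum_add_distrib]
      _ = ∑ C ∈ A.powerset, ∑ D ∈ A.powerset,
            (pins K n j C + pins K n i (insert j C)) * pins K n i D :=
          Finset.sum_mul_sum _ _ _ _
      _ = ∑ C ∈ A.powerset, ∑ D ∈ A.powerset,
            (pins K n i D + pins K n i (insert j D)) * pins K n j C := hrel
      _ = (∑ D ∈ A.powerset, (pins K n i D + pins K n i (insert j D))) *
            ∑ C ∈ A.powerset, pins K n j C := by
          rw [Finset.sum_comm]; exact (Finset.sum_mul_sum _ _ _ _).symm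
      _ = (∑ D ∈ (insert j A).powerset, pins K n i D) * ∑ C ∈ A.powerset, pins K n j C := by
          rw [Finset.sum_powerset_insert hj, Finset.sum_add_distrib]
      _ = (-∑ D ∈ (insert j A).powerset, pins K n i D) * -∑ C ∈ A.powerset, pins K n j C :=
          (neg_mul_neg' _ _).symm

end PSide
noncomputable section Maps

variable (K : Type*) [Field K] (n : ℕ)

/-- The algebra map `Pₙ → Qₙ`, `v_A ↦ u(A)`. -/
noncomputable def Phi : Pn K n →ₐ[K] Qn K n :=
  RingQuot.liftAlgHom K ⟨phiFree K n, fun _ _ h => phiFree_rel K n h⟩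

/-- The algebra map `Qₙ → Pₙ`, `z_{A,i} ↦ −Σ_{D⊆A} v_{D∪{i}}`. -/
noncomputable def Psi : Qn K n →ₐ[K] Pn K n :=
  RingQuot.liftAlgHom K ⟨psiFree K n, fun _ _ h => psiFree_rel K n h⟩

lemma Phi_pP (B : Finset (Fin n)) (hB : B.Nonempty) : Phi K n (pP K n B hB) = uQ K n B := by
  rw [pP, Phi, RingQuot.liftAlgHom_mkAlgHom_apply]
  simp [phiFree, vgen, FreeAlgebra.lift_ι_apply]

lemma Phi_pins (i : Fin n) (D : Finset (Fin n)) :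
    Phi K n (pins K n i D) = uQ K n (insert i D) :=
  Phi_pP K n (insert i D) (Finset.insert_nonempty i D)

lemma Psi_z (A : Finset (Fin n)) (i : Fin n) (hi : i ∉ A) :
    Psi K n (zQ K n A i) = -∑ D ∈ A.powerset, pins K n i D := by
  rw [zQ_eq K n A i hi, Psi, RingQuot.liftAlgHom_mkAlgHom_apply]
  simp [psiFree, FreeAlgebra.lift_ι_apply, psiFun]

lemma Psi_u (A : Finset (Fin n)) (hA : A.Nonempty) : Psi K n (uQ K n A) = pP K n A hA := by
  set m := A.min' hA with hm
  have hmA : m ∈ A := A.min'_mem hA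
  rw [uQ, dif_pos hA, map_sum]
  set s := A.erase m with hs
  have hAcard : 1 ≤ A.card := Finset.card_pos.mpr hA
  have hcard : A.card = s.card + 1 := by
    rw [hs, Finset.card_erase_of_mem hmA]; omega
  have h1 : ∀ D ∈ s.powerset, Psi K n ((-1 : Qn K n) ^ (A.card - D.card) * zQ K n D m)
      = ∑ E ∈ D.powerset, (-1 : Pn K n) ^ (D.card + E.card) *
          ((-1 : Pn K n) ^ (s.card + E.card) * pins K n m E) := by
    intro D hD
    rw [Finset.mem_powerset] at hD
    have hmD : m ∉ D := fun h => (Finset.notMem_erase m A) (hs ▸ hD h)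
    have hDs : D.card ≤ s.card := Finset.card_le_card hD
    rw [map_mul, map_pow, map_neg, map_one, Psi_z K n D m hmD,
      neg_one_pow_nat_sub (by omega : D.card ≤ A.card), hcard,
      show s.card + 1 + D.card = (s.card + D.card) + 1 by omega,
      pow_succ_mul_neg, Finset.mul_sum]
    exact Finset.sum_congr rfl fun E _ => (pow_merge _ _ _ _).symm
  rw [Finset.sum_congr rfl h1]
  have h2 := key_sum s (fun E => (-1 : Pn K n) ^ (s.card + E.card) * pins K n m E)
  rw [h2, show s.card + s.card = 2 * s.card by omega, even_neg_one_pow_mul]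
  exact pP_congr K n _ hA (by rw [hs]; exact Finset.insert_erase hmA)

lemma Phi_comp_Psi : (Phi K n).comp (Psi K n) = AlgHom.id K (Qn K n) := by
  apply RingQuot.ringQuot_ext'
  apply FreeAlgebra.hom_ext
  funext p
  obtain ⟨⟨A, i⟩, hi⟩ := p
  simp only [Function.comp_apply, AlgHom.coe_comp, AlgHom.id_apply]
  rw [← zQ_eq K n A i hi, Psi_z K n A i hi, map_neg, map_sum,
    Finset.sum_congr rfl (fun D _ => Phi_pins K n i D),
    sum_uQ_insert K n A i hi]
  exact neg_neg _

lemma Psi_comp_Phi : (Psi K n).comp (Phi K n) = AlgHom.id K (Pn K n) := by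
  apply RingQuot.ringQuot_ext'
  apply FreeAlgebra.hom_ext
  funext p
  obtain ⟨A, hA⟩ := p
  simp only [Function.comp_apply, AlgHom.coe_comp, AlgHom.id_apply]
  have hp : RingQuot.mkAlgHom K (PnRel K n)
      (FreeAlgebra.ι K (⟨A, hA⟩ : {A : Finset (Fin n) // A.Nonempty})) = pP K n A hA := rfl
  rw [hp, Phi_pP K n A hA, Psi_u K n A hA]

end Maps

/-- There is a `K`-algebra isomorphism `Pₙ → Qₙ` sending the class of `v_A` to `u(A)`
for every nonempty `A ⊆ Iₙ`. -/
theorem Pn_iso_Qn (K : Type*) [Field K] (n : ℕ) :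
    ∃ e : Pn K n ≃ₐ[K] Qn K n,
      ∀ (A : Finset (Fin n)) (hA : A.Nonempty),
        e (RingQuot.mkAlgHom K (PnRel K n) (vgen K n A hA)) = uQ K n A := by
  refine ⟨AlgEquiv.ofAlgHom (Phi K n) (Psi K n) (Phi_comp_Psi K n) (Psi_comp_Phi K n),
    fun A hA => ?_⟩
  exact Phi_pP K n A hA
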